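/- The value of f at its critical point is of order ln ln n: there exist constants C and N such that for all n ≥ N, |f(k*(n), k*(n))| ≤ C · ln ln n. -/

import Mathlib

/-!
On the diagonal,
`∂f/∂k (k, k) = log n - log k - 2k log 2 - log 2 / 2 + (2 + (n - 2k) log 2) 2^{-k}`
is strictly decreasing, positive at `k = 1` and negative at `k = (n - 1)/2`, so it has exactly
one zero `k*` there. Off the diagonal, the difference of the two partial derivatives is
`c 2^{-k} - log k - (c 2^{-l} - log l)` with `c = (n - k - l) log 2 ≥ 0`, which vanishes only
for `k = l`.

With `t = logGap n k = log (n 2^{-k} / k)`, the equation for `k*` becomes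
`k log 2 (eᵗ - 1) + t = log 2 / 2 + 2 · 2^{-k} (k log 2 - 1) ∈ (0, 3)`, forcing
`0 ≤ t ≤ 3 / (k log 2 + 1)`. At a zero,
`log 2 (f(k, k) - log k + 1) = (2k log 2 + log 2 + 2) t + 4 · 2^{-k}`,
so `f(k*, k*) = log k* + O(1)`, and `t ≥ 0` gives `k* ≤ log₂ n`.
-/

open Filter Real

/-- The function `f(k,l)` from the proof of Theorem 1 (with parameter `n`):
`f(k,l) = (k+l+1)·ln n − k·ln k − l·ln l + k + l − ((k+l)²/2)·ln 2 − ((k+l)/2)·ln 2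
          − (n−k−l)·(2^{−k} + 2^{−l})`, where `2^{−k} = exp(−k·ln 2)`. -/
noncomputable def f (n : ℕ) (k l : ℝ) : ℝ :=
  (k + l + 1) * Real.log n - k * Real.log k - l * Real.log l + k + l
    - ((k + l) ^ 2 / 2) * Real.log 2 - ((k + l) / 2) * Real.log 2
    - ((n : ℝ) - k - l) * (Real.exp (-k * Real.log 2) + Real.exp (-l * Real.log 2))

/-- The region `R = {(k,l) : k ≥ 1, l ≥ 1, k + l ≤ n − 1}`. -/
def region (n : ℕ) : Set (ℝ × ℝ) :=
  {p : ℝ × ℝ | 1 ≤ p.1 ∧ 1 ≤ p.2 ∧ p.1 + p.2 ≤ (n : ℝ) - 1}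

/-- `(k, l)` is a critical point of `f n`: both partial derivatives vanish. -/
def IsCritPt (n : ℕ) (k l : ℝ) : Prop :=
  deriv (fun k' => f n k' l) k = 0 ∧ deriv (fun l' => f n k l') l = 0

open Set

noncomputable def partialFst (n : ℕ) (k l : ℝ) : ℝ :=
  log n - log k - (k + l) * log 2 - log 2 / 2 + (exp (-k * log 2) + exp (-l * log 2))
    + ((n : ℝ) - k - l) * log 2 * exp (-k * log 2)

theorem f_comm (n : ℕ) (k l : ℝ) : f n k l = f n l k := by
  unfold f; ring

theorem hasDerivAt_f_fst (n : ℕ) (l : ℝ) {k : ℝ} (hk : 0 < k) :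
    HasDerivAt (fun k' => f n k' l) (partialFst n k l) k := by
  have hid := hasDerivAt_id k
  have hxlogx := hid.mul (hasDerivAt_log hk.ne')
  have hexp := (hid.neg.mul_const (log 2)).exp
  have := ((((((((hid.add_const l).add_const 1).mul_const (log n)).sub hxlogx).sub_const
    (l * log l)).add hid).add_const l).sub ((((hid.add_const l).pow 2).div_const 2).mul_const
    (log 2))).sub (((hid.add_const l).div_const 2).mul_const (log 2)) |>.sub
    ((((hasDerivAt_const k (n : ℝ)).sub hid).sub_const l).mul (hexp.add_const (exp (-l * log 2))))
  refine this.congr_deriv ?_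
  simp only [partialFst, id, Pi.neg_apply, Pi.sub_apply]
  field_simp
  ring

theorem isCritPt_iff (n : ℕ) {k l : ℝ} (hk : 0 < k) (hl : 0 < l) :
    IsCritPt n k l ↔ partialFst n k l = 0 ∧ partialFst n l k = 0 := by
  have hsymm : (fun l' => f n k l') = fun l' => f n l' k := funext fun l' => f_comm n k l'
  rw [IsCritPt, (hasDerivAt_f_fst n l hk).deriv, hsymm, (hasDerivAt_f_fst n k hl).deriv]

theorem strictAntiOn_mul_exp_neg_mul_sub_log {b c : ℝ} (hb : 0 ≤ b) (hc : 0 ≤ c) :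
    StrictAntiOn (fun x => c * exp (-x * b) - log x) (Ioi 0) := by
  intro x hx y _ hxy
  have hlog : log x < log y := log_lt_log hx hxy
  have hexp : exp (-y * b) ≤ exp (-x * b) := exp_le_exp.2 (by nlinarith)
  have := mul_le_mul_of_nonneg_left hexp hc
  simp only
  linarith

theorem eq_of_partialFst_eq_zero {n : ℕ} {k l : ℝ} (hk : 0 < k) (hl : 0 < l)
    (hkl : k + l ≤ n) (h₁ : partialFst n k l = 0) (h₂ : partialFst n l k = 0) : k = l := by
  have hc : 0 ≤ ((n : ℝ) - k - l) * log 2 := mul_nonneg (by linarith) (log_nonneg one_le_two)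
  refine (strictAntiOn_mul_exp_neg_mul_sub_log (log_nonneg one_le_two) hc).injOn hk hl ?_
  simp only [partialFst] at h₁ h₂ ⊢
  linear_combination h₁ - h₂

theorem partialFst_diag (n : ℕ) (k : ℝ) :
    partialFst n k k = log n - log k - 2 * k * log 2 - log 2 / 2
      + (2 + ((n : ℝ) - 2 * k) * log 2) * exp (-k * log 2) := by
  unfold partialFst; ring

theorem strictAntiOn_partialFst_diag (n : ℕ) :
    StrictAntiOn (fun k => partialFst n k k) (Ioc 0 ((n : ℝ) / 2)) := by
  intro x ⟨hx, _⟩ y ⟨_, hy⟩ hxy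
  have hlog : log x < log y := log_lt_log hx hxy
  have hexp : exp (-y * log 2) ≤ exp (-x * log 2) :=
    exp_le_exp.2 (by nlinarith [log_pos one_lt_two])
  have hcoeff : 2 + ((n : ℝ) - 2 * y) * log 2 ≤ 2 + ((n : ℝ) - 2 * x) * log 2 := by
    nlinarith [log_pos one_lt_two]
  have hmul := mul_le_mul hcoeff hexp (exp_pos _).le
    (by nlinarith [log_pos one_lt_two] : (0 : ℝ) ≤ 2 + ((n : ℝ) - 2 * x) * log 2)
  simp only [partialFst_diag]
  nlinarith [log_pos one_lt_two]

theorem exp_neg_one_mul_log_two : exp (-1 * log 2) = 1 / 2 := by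
  rw [neg_one_mul, exp_neg, exp_log two_pos, one_div]

theorem exp_neg_mul_log_two_le_half {k : ℝ} (hk : 1 ≤ k) : exp (-k * log 2) ≤ 1 / 2 :=
  exp_neg_one_mul_log_two ▸ exp_le_exp.2 (by nlinarith [log_pos one_lt_two])

theorem exists_partialFst_diag_eq_zero {n : ℕ} (hn : 6 ≤ n) :
    ∃ k ∈ Icc 1 (((n : ℝ) - 1) / 2), partialFst n k k = 0 := by
  have hn' : (6 : ℝ) ≤ n := by exact_mod_cast hn
  set m : ℝ := ((n : ℝ) - 1) / 2 with hm
  have hm1 : 1 ≤ m := by rw [hm]; linarith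
  have ha := log_two_gt_d9
  have ha' := log_two_lt_d9
  have hcont : ContinuousOn (fun k => partialFst n k k) (Icc 1 m) := by
    unfold partialFst
    fun_prop (disch := intro x hx; linarith [hx.1])
  have hpos : 0 ≤ partialFst n 1 1 := by
    rw [partialFst_diag, exp_neg_one_mul_log_two, log_one]
    nlinarith [log_nonneg (by linarith : (1 : ℝ) ≤ n),
      mul_le_mul_of_nonneg_right (by linarith : (4 : ℝ) ≤ n - 2) (log_nonneg one_le_two)]
  have hneg : partialFst n m m ≤ 0 := by
    have hlog : log n - log m ≤ n / m - 1 := by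
      rw [← log_div (by linarith) (by linarith)]
      exact log_le_sub_one_of_pos (by positivity)
    have hratio : (n : ℝ) / m ≤ 3 := by rw [div_le_iff₀ (by linarith)]; linarith
    have hE := exp_neg_mul_log_two_le_half hm1
    have hnm : (n : ℝ) - 2 * m = 1 := by rw [hm]; ring
    rw [partialFst_diag, hnm]
    nlinarith [exp_pos (-m * log 2)]
  exact intermediate_value_Icc' hm1 hcont ⟨hneg, hpos⟩

noncomputable def logGap (n : ℕ) (k : ℝ) : ℝ := log n - log k - k * log 2

theorem mul_exp_logGap {n : ℕ} {k : ℝ} (hn : 0 < n) (hk : 0 < k) :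
    k * exp (logGap n k) = n * exp (-k * log 2) := by
  rw [logGap, exp_sub, exp_sub, exp_log (by exact_mod_cast hn), exp_log hk, neg_mul, exp_neg]
  field_simp

theorem partialFst_diag_eq_logGap {n : ℕ} {k : ℝ} (hn : 0 < n) (hk : 0 < k) :
    partialFst n k k = log 2 * k * (exp (logGap n k) - 1) + logGap n k
      - log 2 / 2 - 2 * exp (-k * log 2) * (k * log 2 - 1) := by
  have hexp := mul_exp_logGap hn hk
  rw [logGap] at hexp ⊢
  rw [partialFst_diag]
  linear_combination (-log 2) * hexp

theorem logGap_bounds {n : ℕ} {k : ℝ} (hn : 0 < n) (hk : 1 ≤ k) (h : partialFst n k k = 0) :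
    0 ≤ logGap n k ∧ (k * log 2 + 1) * logGap n k ≤ 3 := by
  have key := partialFst_diag_eq_logGap hn (by linarith : 0 < k)
  rw [h] at key
  set t := logGap n k
  set E := exp (-k * log 2)
  have hka : 0 < log 2 * k := mul_pos (log_pos one_lt_two) (by linarith)
  have ha := log_two_gt_d9
  have ha' := log_two_lt_d9
  have hE : E ≤ 1 / 2 := exp_neg_mul_log_two_le_half hk
  have hE0 : 0 < E := exp_pos _
  have hkE : k * log 2 * E ≤ 1 := by
    have hinv : E * exp (k * log 2) = 1 := by rw [← exp_add]; simp
    nlinarith [add_one_le_exp (k * log 2)]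
  have hrhs : 0 < log 2 / 2 + 2 * E * (k * log 2 - 1) := by
    nlinarith [mul_nonneg (mul_nonneg hE0.le (by linarith : (0 : ℝ) ≤ k - 1))
      (log_nonneg one_le_two),
      mul_nonneg (by linarith : (0 : ℝ) ≤ 1 / 2 - E) (by linarith : (0 : ℝ) ≤ 1 - log 2)]
  have ht : 0 ≤ t := by
    by_contra! ht
    nlinarith [mul_pos hka (by linarith [exp_lt_one_iff.2 ht] : 0 < 1 - exp t)]
  refine ⟨ht, ?_⟩
  nlinarith [mul_le_mul_of_nonneg_left (by linarith [add_one_le_exp t] : t ≤ exp t - 1) hka.le]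

theorem log_two_mul_f_diag (n : ℕ) (k : ℝ) :
    log 2 * (f n k k - log k + 1) = (2 * k * log 2 + log 2 + 2) * logGap n k
      + 4 * exp (-k * log 2) - 2 * partialFst n k k := by
  unfold f partialFst logGap; ring

theorem f_diag_bounds {n : ℕ} {k : ℝ} (hn : 0 < n) (hk : 1 ≤ k) (h : partialFst n k k = 0) :
    -1 ≤ f n k k ∧ f n k k ≤ log k + 14 := by
  obtain ⟨ht, ht3⟩ := logGap_bounds hn hk h
  have hid := log_two_mul_f_diag n k
  rw [h] at hid
  have hE := exp_neg_mul_log_two_le_half hk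
  have hE0 := exp_pos (-k * log 2)
  have ha := log_two_gt_d9
  have ha' := log_two_lt_d9
  have hlogk := log_nonneg hk
  have hcoeff : 2 * k * log 2 + log 2 + 2 ≤ (2 + log 2) * (k * log 2 + 1) := by
    nlinarith [mul_nonneg (by linarith : (0 : ℝ) ≤ k) (sq_nonneg (log 2))]
  have hterm := mul_le_mul_of_nonneg_right hcoeff ht
  have ha0 : 0 < log 2 := log_pos one_lt_two
  have hlo : 0 ≤ log 2 * (f n k k - log k + 1) := by
    rw [hid]
    have : 0 ≤ (2 * k * log 2 + log 2 + 2) * logGap n k := mul_nonneg (by positivity) ht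
    linarith
  have hhi : log 2 * (f n k k - log k + 1) ≤ log 2 * 15 := by nlinarith
  constructor
  · linarith [(mul_nonneg_iff_of_pos_left ha0).1 hlo]
  · linarith [le_of_mul_le_mul_left hhi ha0]

theorem mul_log_two_le_log {n : ℕ} {k : ℝ} (hn : 0 < n) (hk : 1 ≤ k)
    (h : partialFst n k k = 0) :
    k * log 2 ≤ log n := by
  have := (logGap_bounds hn hk h).1
  rw [logGap] at this
  linarith [log_nonneg hk]

theorem one_le_log_log {n : ℕ} (hn : 16 ≤ n) : 1 ≤ log (log n) := by
  have h16 : log 16 ≤ log n := log_le_log (by norm_num) (by exact_mod_cast hn)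
  have h16' : log (16 : ℝ) = 4 * log 2 := by
    rw [show (16 : ℝ) = 2 ^ 4 by norm_num, log_pow]; norm_num
  rw [le_log_iff_exp_le (by linarith [log_two_gt_d9])]
  linarith [exp_one_lt_d9, log_two_gt_d9]

theorem abs_f_diag_le {n : ℕ} {k : ℝ} (hn : 16 ≤ n) (hk : 1 ≤ k)
    (h : partialFst n k k = 0) :
    |f n k k| ≤ 16 * log (log n) := by
  have hn0 : 0 < n := by omega
  obtain ⟨hlo, hhi⟩ := f_diag_bounds hn0 hk h
  have hM := one_le_log_log hn
  have hka := mul_log_two_le_log hn0 hk h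
  have hL : 0 < log n := log_pos (by exact_mod_cast (by omega : 1 < n))
  have hlogk : log k ≤ log (log n) + 1 := by
    have hk2 : k ≤ 2 * log n := by nlinarith [log_two_gt_d9]
    calc log k ≤ log (2 * log n) := log_le_log (by linarith) hk2
      _ = log 2 + log (log n) := log_mul two_ne_zero hL.ne'
      _ ≤ log (log n) + 1 := by linarith [log_two_lt_d9]
  rw [abs_le]
  constructor <;> linarith

noncomputable def kStar (n : ℕ) : ℝ :=
  Classical.epsilon fun k => k ∈ Icc 1 (((n : ℝ) - 1) / 2) ∧ partialFst n k k = 0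

theorem kStar_spec {n : ℕ} (hn : 6 ≤ n) :
    kStar n ∈ Icc 1 (((n : ℝ) - 1) / 2) ∧ partialFst n (kStar n) (kStar n) = 0 :=
  Classical.epsilon_spec (exists_partialFst_diag_eq_zero hn)

/-- The value of `f` at its critical point `(k*(n), k*(n))` (the
unique critical point of `f` in the region `R`, for sufficiently large `n`) is of
order `ln ln n`: `|f(k*(n), k*(n))| ≤ C · ln ln n` for all `n ≥ N`. -/
theorem f_at_critical_point :
    ∃ (kstar : ℕ → ℝ) (C : ℝ) (N : ℕ), ∀ n : ℕ, N ≤ n →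
      ((kstar n, kstar n) ∈ region n ∧ IsCritPt n (kstar n) (kstar n) ∧
        ∀ k l : ℝ, (k, l) ∈ region n → IsCritPt n k l → k = kstar n ∧ l = kstar n) ∧
      |f n (kstar n) (kstar n)| ≤ C * Real.log (Real.log n) := by
  refine ⟨kStar, 16, 16, fun n hn => ?_⟩
  obtain ⟨⟨hk1, hkm⟩, hroot⟩ := kStar_spec (n := n) (by omega)
  have hk0 : 0 < kStar n := by linarith
  refine ⟨⟨⟨hk1, hk1, by linarith⟩, (isCritPt_iff n hk0 hk0).2 ⟨hroot, hroot⟩, ?_⟩,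
    abs_f_diag_le hn hk1 hroot⟩
  rintro k l ⟨hk, hl, hkl⟩ hcrit
  obtain ⟨h₁, h₂⟩ := (isCritPt_iff n (by linarith) (by linarith)).1 hcrit
  obtain rfl : k = l := eq_of_partialFst_eq_zero (by linarith) (by linarith) (by linarith) h₁ h₂
  have hk_eq : k = kStar n := (strictAntiOn_partialFst_diag n).injOn
    ⟨by linarith, by linarith⟩ ⟨hk0, by linarith⟩ (h₁.trans hroot.symm)
  exact ⟨hk_eq, hk_eq⟩
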